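/- Let A be a d×n integer matrix such that the only vector in ker(A) with all coordinates nonnegative is 0. Suppose A has a unique minimal Markov basis up to sign, i.e., there is a minimal Markov basis M such that every minimal Markov basis B satisfies B ∪ (−B) = M ∪ (−M), and suppose M is distance reducing. Then S(A) ∪ (−S(A)) = D(A) = M ∪ (−M) = 𝒟(A) ∪ (−𝒟(A)), where 𝒟(A) denotes the union of all minimally distance reducing subsets of ker(A). -/

import Mathlib

open Pointwise

namespace DistRed

variable {n d : ℕ}

/-- Componentwise positive part `u⁺`. -/
def posP (u : Fin n → ℤ) : Fin n → ℤ := fun i => max (u i) 0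

/-- Componentwise negative part `u⁻`. -/
def negP (u : Fin n → ℤ) : Fin n → ℤ := fun i => max (-u i) 0

/-- The 1-norm `‖u‖ = ∑ᵢ |uᵢ|`. -/
def onorm (u : Fin n → ℤ) : ℤ := ∑ i, |u i|

/-- Componentwise inequality of vectors. -/
def vle (u v : Fin n → ℤ) : Prop := ∀ i, u i ≤ v i

/-- The single move `u` reduces the 1-norm distance of `z = z⁺ - z⁻`. -/
def reducesOne (u z : Fin n → ℤ) : Prop :=
  (vle (posP u) (posP z) ∧ onorm (z - u) < onorm z) ∨
  (vle (negP u) (posP z) ∧ onorm (z + u) < onorm z) ∨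
  (vle (posP u) (negP z) ∧ onorm (z + u) < onorm z) ∨
  (vle (negP u) (negP z) ∧ onorm (z - u) < onorm z)

/-- `B` reduces the distance of `z`. -/
def reduces (B : Set (Fin n → ℤ)) (z : Fin n → ℤ) : Prop := ∃ u ∈ B, reducesOne u z

/-- `B` strongly reduces the distance of `z`. -/
def stronglyReduces (B : Set (Fin n → ℤ)) (z : Fin n → ℤ) : Prop :=
  (∃ u ∈ B, (vle (posP u) (posP z) ∧ onorm (z - u) < onorm z) ∨
            (vle (negP u) (posP z) ∧ onorm (z + u) < onorm z)) ∧
  (∃ u ∈ B, (vle (posP u) (negP z) ∧ onorm (z + u) < onorm z) ∨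
            (vle (negP u) (negP z) ∧ onorm (z - u) < onorm z))

/-- `B` is distance reducing relative to the kernel `K`. -/
def distanceReducing (K B : Set (Fin n → ℤ)) : Prop := ∀ z ∈ K, z ≠ 0 → reduces B z

/-- `B` is strongly distance reducing relative to the kernel `K`. -/
def stronglyDistanceReducing (K B : Set (Fin n → ℤ)) : Prop :=
  ∀ z ∈ K, z ≠ 0 → stronglyReduces B z

/-- The Graver basis: nonzero elements of `K` with no proper conformal decomposition. -/
def graver (K : Set (Fin n → ℤ)) : Set (Fin n → ℤ) :=
  {z | z ∈ K ∧ z ≠ 0 ∧ ¬ ∃ u v, u ∈ K ∧ v ∈ K ∧ u ≠ 0 ∧ v ≠ 0 ∧ z = u + v ∧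
      posP z = posP u + posP v ∧ negP z = negP u + negP v}

/-- `B` connects `x` and `y` through nonnegative points by moves in `B ∪ -B`. -/
def connects (B : Set (Fin n → ℤ)) (x y : Fin n → ℤ) : Prop :=
  ∃ (k : ℕ) (f : Fin (k + 1) → Fin n → ℤ),
    f 0 = x ∧ f (Fin.last k) = y ∧ (∀ i j, 0 ≤ f i j) ∧
    ∀ i : Fin k, f i.succ - f i.castSucc ∈ B ∪ -B

/-- Kernel of an integer matrix. -/
def kerM (A : Matrix (Fin d) (Fin n) ℤ) : Set (Fin n → ℤ) := {u | A.mulVec u = 0}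

/-- Markov basis of a matrix. -/
def isMarkovM (A : Matrix (Fin d) (Fin n) ℤ) (B : Set (Fin n → ℤ)) : Prop :=
  B ⊆ kerM A ∧ ∀ x y : Fin n → ℤ, (∀ j, 0 ≤ x j) → (∀ j, 0 ≤ y j) →
    A.mulVec x = A.mulVec y → connects B x y

def isMinimalMarkovM (A : Matrix (Fin d) (Fin n) ℤ) (B : Set (Fin n → ℤ)) : Prop :=
  isMarkovM A B ∧ ∀ B' ⊂ B, ¬ isMarkovM A B'

/-- Kernel of the 1×n matrix `a`. -/
def kerV (a : Fin n → ℕ) : Set (Fin n → ℤ) := {u | ∑ i, (a i : ℤ) * u i = 0}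

/-- Markov basis of a 1×n matrix. -/
def isMarkov (a : Fin n → ℕ) (B : Set (Fin n → ℤ)) : Prop :=
  B ⊆ kerV a ∧ ∀ x y : Fin n → ℤ, (∀ j, 0 ≤ x j) → (∀ j, 0 ≤ y j) →
    (∑ i, (a i : ℤ) * x i) = (∑ i, (a i : ℤ) * y i) → connects B x y

def isMinimalMarkov (a : Fin n → ℕ) (B : Set (Fin n → ℤ)) : Prop :=
  isMarkov a B ∧ ∀ B' ⊂ B, ¬ isMarkov a B'

/-- The circuit `z_{i,j}` of the 1×n matrix `a`. -/
def circuit (a : Fin n → ℕ) (i j : Fin n) : Fin n → ℤ :=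
  fun k => if k = i then ((a j / Nat.gcd (a i) (a j) : ℕ) : ℤ)
           else if k = j then -((a i / Nat.gcd (a i) (a j) : ℕ) : ℤ) else 0

/-- `B` reduces the distance of all circuits of `a`. -/
def reducesCircuits (a : Fin n → ℕ) (B : Set (Fin n → ℤ)) : Prop :=
  ∀ i j : Fin n, i < j → reduces B (circuit a i j)

/-- `a` admits a gluing of the first kind. -/
def firstKind (a : Fin n → ℕ) : Prop :=
  ∀ k : Fin n, 1 ≤ k.val →
    ∃ lam : Fin n → ℕ, (∀ i, ¬ i < k → lam i = 0) ∧
      Nat.lcm ((Finset.univ.filter (fun i : Fin n => i < k)).gcd a) (a k) = ∑ i, lam i * a i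

/-- Kernel of the submatrix of `a` indexed by `S`, as vectors supported on `S`. -/
def kerOn (a : Fin n → ℕ) (S : Finset (Fin n)) : Set (Fin n → ℤ) :=
  {u | (∀ i, i ∉ S → u i = 0) ∧ ∑ i, (a i : ℤ) * u i = 0}

/-- `a` is glued along the pair of disjoint index sets `(S, T)`. -/
def gluedOn (a : Fin n → ℕ) (S T : Finset (Fin n)) : Prop :=
  ∃ z ∈ kerOn a (S ∪ T), (∀ i, 0 < z i → i ∈ S) ∧ (∀ i, z i < 0 → i ∈ T) ∧
    ∀ w ∈ kerOn a (S ∪ T), ∃! t : (Fin n → ℤ) × (Fin n → ℤ) × ℤ,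
      t.1 ∈ kerOn a S ∧ t.2.1 ∈ kerOn a T ∧ w = t.1 + t.2.1 + t.2.2 • z

/-- Complete intersection on the index set `S` (recursively defined via gluings). -/
inductive IsCIOn (a : Fin n → ℕ) : Finset (Fin n) → Prop
  | single (i : Fin n) : IsCIOn a {i}
  | glue {S T : Finset (Fin n)} (hS : S.Nonempty) (hT : T.Nonempty)
      (hd : Disjoint S T) (hg : gluedOn a S T) (cS : IsCIOn a S) (cT : IsCIOn a T) :
      IsCIOn a (S ∪ T)

/-- `a` is a complete intersection. -/
def isCI (a : Fin n → ℕ) : Prop := IsCIOn a Finset.univ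

/-- Positive distance decomposition. -/
def posDD (K : Set (Fin n → ℤ)) (z : Fin n → ℤ) : Prop :=
  ∃ u v, u ∈ K ∧ v ∈ K ∧ u ≠ 0 ∧ v ≠ 0 ∧ z = u + v ∧ vle (posP u) (posP z) ∧
    onorm v < onorm z

/-- Negative distance decomposition. -/
def negDD (K : Set (Fin n → ℤ)) (z : Fin n → ℤ) : Prop :=
  ∃ u v, u ∈ K ∧ v ∈ K ∧ u ≠ 0 ∧ v ≠ 0 ∧ z = u + v ∧ vle (negP u) (negP z) ∧
    onorm v < onorm z

def Dplus (K : Set (Fin n → ℤ)) : Set (Fin n → ℤ) := {z | z ∈ K ∧ z ≠ 0 ∧ ¬ posDD K z}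

def Dminus (K : Set (Fin n → ℤ)) : Set (Fin n → ℤ) := {z | z ∈ K ∧ z ≠ 0 ∧ ¬ negDD K z}

/-- The distance irreducible elements `D(A)`. -/
def Dboth (K : Set (Fin n → ℤ)) : Set (Fin n → ℤ) := Dplus K ∩ Dminus K

/-- The weakly distance irreducible elements `D^w(A)`. -/
def Dweak (K : Set (Fin n → ℤ)) : Set (Fin n → ℤ) := Dplus K ∪ Dminus K

/-- The indispensable set `S(A)`. -/
def indisp (K : Set (Fin n → ℤ)) : Set (Fin n → ℤ) :=
  {z | z ∈ K ∧ z ≠ 0 ∧ ¬ ∃ u v, u ∈ K ∧ v ∈ K ∧ u ≠ 0 ∧ v ≠ 0 ∧ z = u + v ∧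
      ∀ i, 0 < u i → 0 ≤ v i}

/-- Minimally distance reducing subset of `K`. -/
def minDistRed (K B : Set (Fin n → ℤ)) : Prop :=
  B ⊆ K ∧ distanceReducing K B ∧ ∀ B' ⊂ B, ¬ distanceReducing K B'

/-- Minimally strongly distance reducing subset of `K`. -/
def minStrongDistRed (K B : Set (Fin n → ℤ)) : Prop :=
  B ⊆ K ∧ stronglyDistanceReducing K B ∧ ∀ B' ⊂ B, ¬ stronglyDistanceReducing K B'



section Aux

variable {A : Matrix (Fin d) (Fin n) ℤ}

lemma kerM_neg {u : Fin n → ℤ} (h : u ∈ kerM A) : -u ∈ kerM A := by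
  simp only [kerM, Set.mem_setOf_eq] at h ⊢
  rw [Matrix.mulVec_neg, h, neg_zero]

lemma kerM_sub {u v : Fin n → ℤ} (hu : u ∈ kerM A) (hv : v ∈ kerM A) : u - v ∈ kerM A := by
  simp only [kerM, Set.mem_setOf_eq] at hu hv ⊢
  rw [Matrix.mulVec_sub, hu, hv, sub_zero]

lemma kerM_add {u v : Fin n → ℤ} (hu : u ∈ kerM A) (hv : v ∈ kerM A) : u + v ∈ kerM A := by
  simp only [kerM, Set.mem_setOf_eq] at hu hv ⊢
  rw [Matrix.mulVec_add, hu, hv, add_zero]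

lemma mem_union_neg_ker {B : Set (Fin n → ℤ)} (hB : B ⊆ kerM A) {u : Fin n → ℤ}
    (h : u ∈ B ∪ -B) : u ∈ kerM A := by
  rcases h with h | h
  · exact hB h
  · have := kerM_neg (hB (Set.mem_neg.mp h))
    rwa [neg_neg] at this

lemma posP_neg (u : Fin n → ℤ) : posP (-u) = negP u := rfl

lemma negP_neg (u : Fin n → ℤ) : negP (-u) = posP u := by
  funext i; simp [posP, negP]

lemma onorm_nonneg (u : Fin n → ℤ) : 0 ≤ onorm u :=
  Finset.sum_nonneg fun _ _ => abs_nonneg _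

lemma onorm_neg (u : Fin n → ℤ) : onorm (-u) = onorm u := by
  unfold onorm; simp

lemma onorm_sub_bound {z w : Fin n → ℤ} : onorm w ≤ onorm z + onorm (z - w) := by
  unfold onorm
  rw [← Finset.sum_add_distrib]
  apply Finset.sum_le_sum
  intro i _
  have h1 : w i = z i - (z - w) i := by simp
  calc |w i| = |z i - (z - w) i| := by rw [← h1]
  _ ≤ |z i| + |(z - w) i| := abs_sub _ _

lemma onorm_add_bound {z w : Fin n → ℤ} : onorm w ≤ onorm (z + w) + onorm z := by
  unfold onorm
  rw [← Finset.sum_add_distrib]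
  apply Finset.sum_le_sum
  intro i _
  have h1 : w i = (z + w) i - z i := by simp
  calc |w i| = |(z + w) i - z i| := by rw [← h1]
  _ ≤ |(z + w) i| + |z i| := abs_sub _ _

lemma reducesOne_norm_bound {u z : Fin n → ℤ} (h : reducesOne u z) : onorm u < 2 * onorm z := by
  rcases h with ⟨-, hlt⟩ | ⟨-, hlt⟩ | ⟨-, hlt⟩ | ⟨-, hlt⟩
  · have := onorm_sub_bound (z := z) (w := u); linarith
  · have := onorm_add_bound (z := z) (w := u); linarith
  · have := onorm_add_bound (z := z) (w := u); linarith
  · have := onorm_sub_bound (z := z) (w := u); linarith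

lemma reducesOne_neg {u z : Fin n → ℤ} (h : reducesOne u z) : reducesOne (-u) z := by
  unfold reducesOne at h ⊢
  rw [posP_neg, negP_neg, sub_neg_eq_add, ← sub_eq_add_neg]
  tauto

lemma vle_negP_of {z u v : Fin n → ℤ} (hzuv : z = u + v) (h : vle (posP u) (posP z)) :
    vle (negP v) (negP z) := by
  intro i
  have h' := h i
  have hz : z i = u i + v i := by rw [hzuv]; rfl
  simp only [posP, negP] at h' ⊢
  omega

lemma vle_posP_of {z u v : Fin n → ℤ} (hzuv : z = u + v) (h : vle (negP u) (negP z)) :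
    vle (posP v) (posP z) := by
  intro i
  have h' := h i
  have hz : z i = u i + v i := by rw [hzuv]; rfl
  simp only [posP, negP] at h' ⊢
  omega

lemma semiconf_posP {z u v : Fin n → ℤ} (hzuv : z = u + v) (h : ∀ i, 0 < u i → 0 ≤ v i) :
    vle (posP u) (posP z) := by
  intro i
  have hz : z i = u i + v i := by rw [hzuv]; rfl
  by_cases hp : 0 < u i
  · have hv := h i hp
    simp only [posP]; omega
  · simp only [posP]; omega

lemma semiconf_of_posP {z u v : Fin n → ℤ} (hzuv : z = u + v) (h : vle (posP u) (posP z)) :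
    ∀ i, 0 < u i → 0 ≤ v i := by
  intro i hi
  have h' := h i
  have hz : z i = u i + v i := by rw [hzuv]; rfl
  simp only [posP] at h'
  omega

lemma semiconf_of_negP {z u v : Fin n → ℤ} (hzuv : z = u + v) (h : vle (negP u) (negP z)) :
    ∀ i, 0 < v i → 0 ≤ u i := by
  intro i hi
  have h' := h i
  have hz : z i = u i + v i := by rw [hzuv]; rfl
  simp only [negP] at h'
  omega

/-- One step of a Markov walk: the target is nonnegative and the move is in `B ∪ -B`. -/
def stepR (B : Set (Fin n → ℤ)) (w w' : Fin n → ℤ) : Prop :=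
  (∀ j, 0 ≤ w' j) ∧ w' - w ∈ B ∪ -B

lemma rtg_of_path {B : Set (Fin n → ℤ)} :
    ∀ (k : ℕ) (f : Fin (k + 1) → Fin n → ℤ), (∀ i j, 0 ≤ f i j) →
    (∀ i : Fin k, f i.succ - f i.castSucc ∈ B ∪ -B) →
    Relation.ReflTransGen (stepR B) (f 0) (f (Fin.last k))
  | 0, f, hnn, _ => by
      simpa [Fin.last] using (Relation.ReflTransGen.refl (a := f 0))
  | (k + 1), f, hnn, hstep => by
      have ih := rtg_of_path k (f ∘ Fin.castSucc) (fun i j => hnn _ j) (fun i => by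
        have := hstep i.castSucc
        exact this)
      have e0 : (f ∘ Fin.castSucc) 0 = f 0 := by simp
      have el : (f ∘ Fin.castSucc) (Fin.last k) = f (Fin.last k).castSucc := rfl
      rw [e0, el] at ih
      refine ih.tail ⟨fun j => hnn _ j, ?_⟩
      have := hstep (Fin.last k)
      rwa [Fin.succ_last] at this

lemma rtg_of_connects {B : Set (Fin n → ℤ)} {x y : Fin n → ℤ} (h : connects B x y) :
    Relation.ReflTransGen (stepR B) x y := by
  obtain ⟨k, f, h0, hl, hnn, hstep⟩ := h
  have := rtg_of_path k f hnn hstep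
  rwa [h0, hl] at this

lemma connects_of_rtg {B : Set (Fin n → ℤ)} {x y : Fin n → ℤ} (hx : ∀ j, 0 ≤ x j)
    (h : Relation.ReflTransGen (stepR B) x y) : connects B x y := by
  induction h with
  | refl => exact ⟨0, fun _ => x, rfl, rfl, fun _ j => hx j, fun i => i.elim0⟩
  | @tail b c hab hbc ih =>
      obtain ⟨k, f, h0, hl, hnn, hstep⟩ := ih
      refine ⟨k + 1, Fin.snoc f c, ?_, ?_, ?_, ?_⟩
      · rw [show (0 : Fin (k + 2)) = (0 : Fin (k + 1)).castSucc by simp, Fin.snoc_castSucc, h0]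
      · rw [Fin.snoc_last]
      · intro i j
        induction i using Fin.lastCases with
        | last => rw [Fin.snoc_last]; exact hbc.1 j
        | cast i => rw [Fin.snoc_castSucc]; exact hnn i j
      · intro i
        induction i using Fin.lastCases with
        | last =>
            rw [Fin.succ_last, Fin.snoc_last, Fin.snoc_castSucc, hl]
            exact hbc.2
        | cast i =>
            rw [Fin.succ_castSucc, Fin.snoc_castSucc, Fin.snoc_castSucc]
            exact hstep i

lemma rtg_nonneg {B : Set (Fin n → ℤ)} {x y : Fin n → ℤ}
    (h : Relation.ReflTransGen (stepR B) x y) (hx : ∀ j, 0 ≤ x j) : ∀ j, 0 ≤ y j := by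
  induction h with
  | refl => exact hx
  | tail _ h2 _ => exact h2.1

lemma fiber_step {w w' : Fin n → ℤ} (hd : w' - w ∈ kerM A) :
    A.mulVec w' = A.mulVec w := by
  simp only [kerM, Set.mem_setOf_eq] at hd
  rw [Matrix.mulVec_sub, sub_eq_zero] at hd
  exact hd

lemma rtg_fiber {B : Set (Fin n → ℤ)} (hB : B ⊆ kerM A) {x y : Fin n → ℤ}
    (h : Relation.ReflTransGen (stepR B) x y) : A.mulVec y = A.mulVec x := by
  induction h with
  | refl => rfl
  | tail _ h2 ih => rw [fiber_step (mem_union_neg_ker hB h2.2), ih]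

lemma fiber_finite (hker : ∀ u ∈ kerM A, (∀ i, 0 ≤ u i) → u = 0) (b : Fin d → ℤ) :
    {w : Fin n → ℤ | (∀ j, 0 ≤ w j) ∧ A.mulVec w = b}.Finite := by
  by_contra hinf
  set F := {w : Fin n → ℤ | (∀ j, 0 ≤ w j) ∧ A.mulVec w = b}
  have hinf2 : F.Infinite := hinf
  have f := hinf2.natEmbedding
  set g : ℕ → (Fin n → ℕ) := fun m j => ((f m : Fin n → ℤ) j).toNat with hg
  have hpwo := (inferInstance : WellQuasiOrderedLE (Fin n → ℕ)).wqo
  obtain ⟨m, m', hmm, hle⟩ := hpwo g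
  have hfm := (f m).2
  have hfm' := (f m').2
  have hdiff : ((f m' : Fin n → ℤ) - (f m : Fin n → ℤ)) ∈ kerM A := by
    simp only [kerM, Set.mem_setOf_eq]
    rw [Matrix.mulVec_sub, hfm'.2, hfm.2, sub_self]
  have hnn : ∀ j, 0 ≤ ((f m' : Fin n → ℤ) - (f m : Fin n → ℤ)) j := by
    intro j
    have h1 := hfm.1 j
    have h2 := hfm'.1 j
    have h3 := hle j
    simp only [hg, Int.toNat_le] at h3
    simp only [Pi.sub_apply]
    omega
  have := hker _ hdiff hnn
  have heq : (f m : Fin n → ℤ) = (f m' : Fin n → ℤ) := by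
    have : (f m' : Fin n → ℤ) - (f m : Fin n → ℤ) = 0 := this
    funext j
    have := congrFun this j
    simp only [Pi.sub_apply, Pi.zero_apply] at this
    omega
  have := f.injective (Subtype.ext heq)
  omega

lemma swap_markov {M : Set (Fin n → ℤ)} {z u v : Fin n → ℤ}
    (hM : isMarkovM A M) (hu : u ∈ kerM A) (hv : v ∈ kerM A)
    (hzuv : z = u + v) (h1 : vle (posP u) (posP z)) (h2 : vle (negP v) (negP z)) :
    isMarkovM A ((M \ {z, -z}) ∪ {u, v}) := by
  constructor
  · intro w hw
    rcases hw with ⟨hw, -⟩ | hw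
    · exact hM.1 hw
    · simp only [Set.mem_insert_iff, Set.mem_singleton_iff] at hw
      rcases hw with rfl | rfl
      · exact hu
      · exact hv
  · intro x y hx hy hxy
    have h := rtg_of_connects (hM.2 x y hx hy hxy)
    apply connects_of_rtg hx
    clear hy hxy
    induction h with
    | refl => exact Relation.ReflTransGen.refl
    | @tail b c hab hbc ih =>
        have hb : ∀ j, 0 ≤ b j := rtg_nonneg hab hx
        have hc : ∀ j, 0 ≤ c j := hbc.1
        by_cases hmem : c - b ∈ ((M \ {z, -z}) ∪ {u, v}) ∪ -((M \ {z, -z}) ∪ {u, v})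
        · exact ih.tail ⟨hc, hmem⟩
        · have hzz : c - b = z ∨ c - b = -z := by
            by_contra hcon
            push_neg at hcon
            apply hmem
            rcases hbc.2 with hd | hd
            · exact Or.inl (Or.inl ⟨hd, by
                simp only [Set.mem_insert_iff, Set.mem_singleton_iff, not_or]
                exact ⟨hcon.1, hcon.2⟩⟩)
            · rw [Set.mem_neg] at hd
              refine Or.inr (Set.mem_neg.mpr (Or.inl ⟨hd, ?_⟩))
              have hne1 : -(c - b) ≠ z := fun h' => hcon.2 (by rw [← h']; simp)
              have hne2 : -(c - b) ≠ -z := fun h' => hcon.1 (by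
                have := congrArg Neg.neg h'
                simpa using this)
              simp only [Set.mem_insert_iff, Set.mem_singleton_iff, not_or]
              exact ⟨hne1, hne2⟩
          have huv : u ∈ (M \ {z, -z}) ∪ {u, v} := Or.inr (by simp)
          have hvv : v ∈ (M \ {z, -z}) ∪ {u, v} := Or.inr (by simp)
          rcases hzz with hzz | hzz
          · -- c = b + z ; go through b + v
            have hcb : ∀ j, c j = z j + b j := by
              intro j
              have := congrFun (sub_eq_iff_eq_add.mp hzz) j
              simpa using this
            have hmid : ∀ j, 0 ≤ (b + v) j := by
              intro j
              have h2j := h2 j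
              have hcj := hc j
              have hbj := hb j
              have hzj := hcb j
              simp only [negP, Pi.add_apply] at h2j ⊢
              omega
            have hd1 : (b + v) - b = v := by abel
            have hd2 : c - (b + v) = u := by
              have : c = z + b := sub_eq_iff_eq_add.mp hzz
              rw [this, hzuv]; abel
            refine Relation.ReflTransGen.tail (ih.tail ⟨hmid, Or.inl ?_⟩) ⟨hc, Or.inl ?_⟩
            · rw [hd1]; exact hvv
            · rw [hd2]; exact huv
          · -- c = b - z ; go through b - u
            have hcb : ∀ j, c j = -z j + b j := by
              intro j
              have : c = -z + b := sub_eq_iff_eq_add.mp hzz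
              have := congrFun this j
              simpa using this
            have hmid : ∀ j, 0 ≤ (b - u) j := by
              intro j
              have h1j := h1 j
              have hcj := hc j
              have hbj := hb j
              have hzj := hcb j
              simp only [posP, Pi.sub_apply] at h1j ⊢
              omega
            have hd1 : (b - u) - b = -u := by abel
            have hd2 : c - (b - u) = -v := by
              have : c = -z + b := sub_eq_iff_eq_add.mp hzz
              rw [this, hzuv]; abel
            refine Relation.ReflTransGen.tail (ih.tail ⟨hmid, Or.inr ?_⟩) ⟨hc, Or.inr ?_⟩
            · rw [hd1, Set.mem_neg, neg_neg]; exact huv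
            · rw [hd2, Set.mem_neg, neg_neg]; exact hvv

lemma exists_min_markov (hker : ∀ u ∈ kerM A, (∀ i, 0 ≤ u i) → u = 0)
    {B : Set (Fin n → ℤ)} (hB : isMarkovM A B) :
    ∃ C ⊆ B, isMinimalMarkovM A C := by
  have hz : ∀ c ⊆ {C : Set (Fin n → ℤ) | isMarkovM A C}, IsChain (· ⊆ ·) c → c.Nonempty →
      ∃ lb ∈ {C : Set (Fin n → ℤ) | isMarkovM A C}, ∀ s ∈ c, lb ⊆ s := by
    intro c hc hchain hne
    refine ⟨⋂₀ c, ?_, fun s hs => Set.sInter_subset_of_mem hs⟩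
    obtain ⟨B₀, hB₀⟩ := hne
    constructor
    · exact (Set.sInter_subset_of_mem hB₀).trans (hc hB₀).1
    · intro x y hx hy hxy
      have hF : {w : Fin n → ℤ | (∀ j, 0 ≤ w j) ∧ A.mulVec w = A.mulVec x}.Finite :=
        fiber_finite hker _
      set F := {w : Fin n → ℤ | (∀ j, 0 ≤ w j) ∧ A.mulVec w = A.mulVec x} with hFdef
      set E : Set (Fin n → ℤ) → Set ((Fin n → ℤ) × (Fin n → ℤ)) :=
        fun C => {p | p.1 ∈ F ∧ p.2 ∈ F ∧ p.2 - p.1 ∈ C ∪ -C} with hEdef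
      have hEfin : (E '' c).Finite := by
        apply Set.Finite.subset (hF.prod hF).finite_subsets
        rintro _ ⟨C, -, rfl⟩
        intro p hp
        exact Set.mk_mem_prod hp.1 hp.2.1
      have hEne : (E '' c).Nonempty := ⟨E B₀, Set.mem_image_of_mem _ hB₀⟩
      obtain ⟨e0, he0, hmin⟩ : ∃ e0 ∈ E '' c, ∀ a' ∈ E '' c, id a' ≤ id e0 → id e0 = id a' := by
        obtain ⟨a, ha⟩ := hEfin.exists_minimal hEne
        exact ⟨a, ha.1, fun a' h1 h2 => le_antisymm (ha.2 h1 h2) h2⟩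
      obtain ⟨C0, hC0c, hC0e⟩ := he0
      have hEmono : ∀ ⦃C C' : Set (Fin n → ℤ)⦄, C ⊆ C' → E C ⊆ E C' := by
        intro C C' hsub p hp
        refine ⟨hp.1, hp.2.1, ?_⟩
        rcases hp.2.2 with h' | h'
        · exact Or.inl (hsub h')
        · exact Or.inr (Set.neg_subset_neg.mpr hsub h')
      have hE0le : ∀ C ∈ c, e0 ⊆ E C := by
        intro C hCc
        rcases eq_or_ne C C0 with rfl | hne'
        · rw [← hC0e]
        · rcases hchain hC0c hCc (fun h' => hne' h'.symm) with h' | h'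
          · rw [← hC0e]; exact hEmono h'
          · have : E C ⊆ e0 := by rw [← hC0e]; exact hEmono h'
            have := hmin (E C) (Set.mem_image_of_mem _ hCc) this
            simp only [id] at this
            rw [← this]
        
      have hC0markov := hc hC0c
      have hpath := rtg_of_connects (hC0markov.2 x y hx hy hxy)
      apply connects_of_rtg hx
      clear hy hxy
      induction hpath with
      | refl => exact Relation.ReflTransGen.refl
      | @tail b c' hab hbc ih =>
          have hbF : b ∈ F := ⟨rtg_nonneg hab hx, rtg_fiber hC0markov.1 hab⟩
          have hc'F : c' ∈ F := ⟨hbc.1, by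
            rw [fiber_step (mem_union_neg_ker hC0markov.1 hbc.2)]
            exact hbF.2⟩
          have hedge : (b, c') ∈ e0 := by
            rw [← hC0e]; exact ⟨hbF, hc'F, hbc.2⟩
          have hall : ∀ C ∈ c, c' - b ∈ C ∪ -C := fun C hC => (hE0le C hC hedge).2.2
          have hmem : c' - b ∈ (⋂₀ c) ∪ -(⋂₀ c) := by
            by_contra hcon
            simp only [Set.mem_union, Set.mem_sInter, Set.mem_neg] at hcon
            push_neg at hcon
            obtain ⟨⟨C₁, hC₁, hn₁⟩, ⟨C₂, hC₂, hn₂⟩⟩ := hcon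
            rcases eq_or_ne C₁ C₂ with rfl | hne'
            · rcases hall C₁ hC₁ with h' | h'
              · exact hn₁ h'
              · exact hn₂ (Set.mem_neg.mp h')
            · rcases hchain hC₁ hC₂ hne' with h' | h'
              · rcases hall C₁ hC₁ with h'' | h''
                · exact hn₁ h''
                · exact hn₂ (h' (Set.mem_neg.mp h''))
              · rcases hall C₂ hC₂ with h'' | h''
                · exact hn₁ (h' h'')
                · exact hn₂ (Set.mem_neg.mp h'')
          exact ih.tail ⟨hbc.1, hmem⟩
  obtain ⟨m, hmB, hmmin⟩ := zorn_superset_nonempty {C : Set (Fin n → ℤ) | isMarkovM A C} hz B hB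
  refine ⟨m, hmB, hmmin.1, ?_⟩
  intro B' hB' hB'markov
  obtain ⟨hsub, hnsub⟩ := ssubset_iff_subset_not_subset.mp hB'
  exact hnsub (hmmin.2 hB'markov hsub)

lemma zero_not_mem_min {M : Set (Fin n → ℤ)} (hM : isMinimalMarkovM A M) :
    (0 : Fin n → ℤ) ∉ M := by
  intro h0
  refine hM.2 (M \ {0}) ?_ ⟨fun w hw => hM.1.1 hw.1, ?_⟩
  · exact Set.sdiff_singleton_ssubset.mpr h0
  · intro x y hx hy hxy
    have h := rtg_of_connects (hM.1.2 x y hx hy hxy)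
    apply connects_of_rtg hx
    clear hy hxy
    induction h with
    | refl => exact Relation.ReflTransGen.refl
    | @tail b c hab hbc ih =>
        rcases eq_or_ne (c - b) 0 with hd | hd
        · rw [sub_eq_zero] at hd
          exact hd ▸ ih
        · refine ih.tail ⟨hbc.1, ?_⟩
          rcases hbc.2 with h' | h'
          · exact Or.inl ⟨h', hd⟩
          · rw [Set.mem_neg] at h'
            exact Or.inr (Set.mem_neg.mpr ⟨h', neg_ne_zero.mpr hd⟩)

lemma core (hker : ∀ u ∈ kerM A, (∀ i, 0 ≤ u i) → u = 0)
    {M : Set (Fin n → ℤ)} (hM : isMinimalMarkovM A M)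
    (huniq : ∀ B : Set (Fin n → ℤ), isMinimalMarkovM A B → B ∪ -B = M ∪ -M)
    {z u v : Fin n → ℤ} (hz : z ∈ M)
    (hu : u ∈ kerM A) (hv : v ∈ kerM A) (hu0 : u ≠ 0) (hv0 : v ≠ 0)
    (hzuv : z = u + v) (h1 : vle (posP u) (posP z)) : False := by
  have hzker : z ∈ kerM A := hM.1.1 hz
  have h2 := vle_negP_of hzuv h1
  have hMark := swap_markov hM.1 hu hv hzuv h1 h2
  obtain ⟨C, hCsub, hCmin⟩ := exists_min_markov hker hMark
  have hCuniq := huniq C hCmin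
  have hzC : z ∈ C ∪ -C := by rw [hCuniq]; exact Or.inl hz
  have hzM' : z ∈ ((M \ {z, -z}) ∪ {u, v}) ∪ -((M \ {z, -z}) ∪ {u, v}) := by
    rcases hzC with h | h
    · exact Or.inl (hCsub h)
    · exact Or.inr (Set.neg_subset_neg.mpr hCsub h)
  have hcase : z = u ∨ z = v ∨ -z = u ∨ -z = v := by
    rcases hzM' with h | h
    · rcases h with ⟨-, hmem⟩ | h
      · exact absurd (by simp) hmem
      · simp only [Set.mem_insert_iff, Set.mem_singleton_iff] at h
        tauto
    · rw [Set.mem_neg] at h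
      rcases h with ⟨-, hmem⟩ | h
      · exact absurd (by simp) hmem
      · simp only [Set.mem_insert_iff, Set.mem_singleton_iff] at h
        tauto
  rcases hcase with h | h | h | h
  · apply hv0
    have : u + v = u + 0 := by rw [← hzuv, h, add_zero]
    exact add_left_cancel this
  · apply hu0
    have : u + v = 0 + v := by rw [← hzuv, h, zero_add]
    exact add_right_cancel this
  · -- u = -z, v = z + z
    apply hu0
    have hveq : v = z - u := by rw [hzuv]; abel
    rw [← h, sub_neg_eq_add] at hveq
    have hznn : ∀ i, 0 ≤ z i := by
      intro i
      have h2i := h2 i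
      rw [hveq] at h2i
      simp only [negP, Pi.add_apply] at h2i
      omega
    have hz0 : z = 0 := hker z hzker hznn
    rw [← h, hz0, neg_zero]
  · -- v = -z, u = z + z
    apply hv0
    have hueq : u = z - v := by rw [hzuv]; abel
    rw [← h, sub_neg_eq_add] at hueq
    have hznp : ∀ i, 0 ≤ (-z) i := by
      intro i
      have h1i := h1 i
      rw [hueq] at h1i
      simp only [posP, Pi.add_apply, Pi.neg_apply] at h1i ⊢
      omega
    have hz0 : -z = 0 := hker (-z) (kerM_neg hzker) hznp
    rw [← h, hz0]

lemma dboth_neg {z : Fin n → ℤ} (h : z ∈ Dboth (kerM A)) : -z ∈ Dboth (kerM A) := by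
  obtain ⟨⟨hzK, hz0, hpos⟩, ⟨-, -, hneg⟩⟩ := h
  refine ⟨⟨kerM_neg hzK, neg_ne_zero.mpr hz0, ?_⟩, ⟨kerM_neg hzK, neg_ne_zero.mpr hz0, ?_⟩⟩
  · rintro ⟨u, v, hu, hv, hu0, hv0, heq, hle, hlt⟩
    apply hneg
    refine ⟨-u, -v, kerM_neg hu, kerM_neg hv, neg_ne_zero.mpr hu0, neg_ne_zero.mpr hv0, ?_, ?_, ?_⟩
    · rw [← neg_add, ← heq, neg_neg]
    · rw [negP_neg]
      intro i
      have := hle i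
      rwa [show posP (-z) = negP z from rfl] at this
    · rw [onorm_neg]
      rwa [onorm_neg] at hlt
  · rintro ⟨u, v, hu, hv, hu0, hv0, heq, hle, hlt⟩
    apply hpos
    refine ⟨-u, -v, kerM_neg hu, kerM_neg hv, neg_ne_zero.mpr hu0, neg_ne_zero.mpr hv0, ?_, ?_, ?_⟩
    · rw [← neg_add, ← heq, neg_neg]
    · rw [posP_neg]
      intro i
      have := hle i
      rwa [show negP (-z) = posP z from negP_neg z] at this
    · rw [onorm_neg]
      rwa [onorm_neg] at hlt

lemma dboth_subset_of_dr {B : Set (Fin n → ℤ)} (hBK : B ⊆ kerM A)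
    (hdr : distanceReducing (kerM A) B) : Dboth (kerM A) ⊆ B ∪ -B := by
  rintro z ⟨⟨hzK, hz0, hpos⟩, ⟨-, -, hneg⟩⟩
  obtain ⟨u, huB, hred⟩ := hdr z hzK hz0
  have huK := hBK huB
  rcases hred with ⟨hle, hlt⟩ | ⟨hle, hlt⟩ | ⟨hle, hlt⟩ | ⟨hle, hlt⟩
  · rcases eq_or_ne (z - u) 0 with h | h
    · rw [sub_eq_zero] at h
      exact Or.inl (h ▸ huB)
    · exfalso; apply hpos
      have hu0 : u ≠ 0 := by
        intro h0; rw [h0, sub_zero] at hlt; exact lt_irrefl _ hlt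
      exact ⟨u, z - u, huK, kerM_sub hzK huK, hu0, h, by abel, hle, hlt⟩
  · rcases eq_or_ne (z + u) 0 with h | h
    · right
      rw [Set.mem_neg, neg_eq_of_add_eq_zero_right h]
      exact huB
    · exfalso; apply hpos
      have hu0 : u ≠ 0 := by
        intro h0; rw [h0, add_zero] at hlt; exact lt_irrefl _ hlt
      refine ⟨-u, z + u, kerM_neg huK, kerM_add hzK huK, neg_ne_zero.mpr hu0, h, by abel, ?_, hlt⟩
      rw [posP_neg]; exact hle
  · rcases eq_or_ne (z + u) 0 with h | h
    · right
      rw [Set.mem_neg, neg_eq_of_add_eq_zero_right h]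
      exact huB
    · exfalso; apply hneg
      have hu0 : u ≠ 0 := by
        intro h0; rw [h0, add_zero] at hlt; exact lt_irrefl _ hlt
      refine ⟨-u, z + u, kerM_neg huK, kerM_add hzK huK, neg_ne_zero.mpr hu0, h, by abel, ?_, hlt⟩
      rw [negP_neg]; exact hle
  · rcases eq_or_ne (z - u) 0 with h | h
    · rw [sub_eq_zero] at h
      exact Or.inl (h ▸ huB)
    · exfalso; apply hneg
      have hu0 : u ≠ 0 := by
        intro h0; rw [h0, sub_zero] at hlt; exact lt_irrefl _ hlt
      exact ⟨u, z - u, huK, kerM_sub hzK huK, hu0, h, by abel, hle, hlt⟩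

lemma ball_finite (c : ℤ) : {u : Fin n → ℤ | onorm u < c}.Finite := by
  apply Set.Finite.subset (Set.Finite.pi (fun i : Fin n => Set.finite_Icc (-c) c))
  intro u hu
  simp only [Set.mem_setOf_eq] at hu
  rw [Set.mem_univ_pi]
  intro i
  have h1 : |u i| ≤ onorm u :=
    Finset.single_le_sum (f := fun j => |u j|) (fun j _ => abs_nonneg _) (Finset.mem_univ i)
  have h2 : |u i| ≤ c := le_of_lt (lt_of_le_of_lt h1 hu)
  exact Set.mem_Icc.mpr (abs_le.mp h2)

lemma exists_min_dr {M : Set (Fin n → ℤ)} (hMK : M ⊆ kerM A)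
    (hdr : distanceReducing (kerM A) M) : ∃ B, B ⊆ M ∧ minDistRed (kerM A) B := by
  have hz : ∀ c ⊆ {B : Set (Fin n → ℤ) | B ⊆ M ∧ distanceReducing (kerM A) B},
      IsChain (· ⊆ ·) c → c.Nonempty →
      ∃ lb ∈ {B : Set (Fin n → ℤ) | B ⊆ M ∧ distanceReducing (kerM A) B}, ∀ s ∈ c, lb ⊆ s := by
    intro c hc hchain hne
    obtain ⟨B₀, hB₀⟩ := hne
    refine ⟨⋂₀ c, ⟨(Set.sInter_subset_of_mem hB₀).trans (hc hB₀).1, ?_⟩,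
      fun s hs => Set.sInter_subset_of_mem hs⟩
    intro w hwK hw0
    set R := {u : Fin n → ℤ | reducesOne u w} with hR
    have hRfin : R.Finite :=
      (ball_finite (2 * onorm w)).subset (fun u hu => reducesOne_norm_bound hu)
    set Efun : Set (Fin n → ℤ) → Set (Fin n → ℤ) := fun B => B ∩ R with hEfun
    have hEfin : (Efun '' c).Finite := by
      apply Set.Finite.subset hRfin.finite_subsets
      rintro _ ⟨B', -, rfl⟩
      exact Set.inter_subset_right
    have hEne : (Efun '' c).Nonempty := ⟨Efun B₀, Set.mem_image_of_mem _ hB₀⟩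
    obtain ⟨e0, he0, hmin⟩ : ∃ e0 ∈ Efun '' c, ∀ a' ∈ Efun '' c, id a' ≤ id e0 → id e0 = id a' := by
      obtain ⟨a, ha⟩ := hEfin.exists_minimal hEne
      exact ⟨a, ha.1, fun a' h1 h2 => le_antisymm (ha.2 h1 h2) h2⟩
    obtain ⟨C0, hC0c, hC0e⟩ := he0
    have hE0le : ∀ B' ∈ c, e0 ⊆ Efun B' := by
      intro B' hB'c
      rcases eq_or_ne B' C0 with rfl | hne'
      · rw [← hC0e]
      · rcases hchain hC0c hB'c (fun h' => hne' h'.symm) with h' | h'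
        · rw [← hC0e]
          exact Set.inter_subset_inter_left _ h'
        · have hsub : Efun B' ⊆ e0 := by
            rw [← hC0e]
            exact Set.inter_subset_inter_left _ h'
          have := hmin (Efun B') (Set.mem_image_of_mem _ hB'c) hsub
          simp only [id] at this
          rw [← this]
    have he0ne : e0.Nonempty := by
      obtain ⟨u, huC0, hured⟩ := (hc hC0c).2 w hwK hw0
      exact ⟨u, by rw [← hC0e]; exact ⟨huC0, hured⟩⟩
    obtain ⟨u, hu⟩ := he0ne
    refine ⟨u, ?_, ?_⟩
    · rw [Set.mem_sInter]
      intro B' hB'c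
      exact (hE0le B' hB'c hu).1
    · have := hE0le C0 hC0c hu
      exact this.2
  obtain ⟨m, hmM, hmmin⟩ := zorn_superset_nonempty
    {B : Set (Fin n → ℤ) | B ⊆ M ∧ distanceReducing (kerM A) B} hz M ⟨subset_rfl, hdr⟩
  refine ⟨m, hmM, hmmin.1.1.trans hMK, hmmin.1.2, ?_⟩
  intro B' hB' hdr'
  obtain ⟨hsub, hnsub⟩ := ssubset_iff_subset_not_subset.mp hB'
  exact hnsub (hmmin.2 ⟨hsub.trans hmmin.1.1, hdr'⟩ hsub)

end Aux

/-- if `A` has a unique (up to sign) minimal Markov basis which is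
distance reducing, then S(A)±=D(A)=M±=𝒟(A)±. -/
theorem unique_min_markov_dist_irred {d n : ℕ} (A : Matrix (Fin d) (Fin n) ℤ)
    (hker : ∀ u ∈ kerM A, (∀ i, 0 ≤ u i) → u = 0)
    (M : Set (Fin n → ℤ)) (hM : isMinimalMarkovM A M)
    (huniq : ∀ B : Set (Fin n → ℤ), isMinimalMarkovM A B → B ∪ -B = M ∪ -M)
    (hdr : distanceReducing (kerM A) M) :
    indisp (kerM A) ∪ -(indisp (kerM A)) = Dboth (kerM A) ∧
    Dboth (kerM A) = M ∪ -M ∧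
    M ∪ -M = {z | ∃ B, minDistRed (kerM A) B ∧ z ∈ B} ∪
             -{z | ∃ B, minDistRed (kerM A) B ∧ z ∈ B} := by
  have hMK : M ⊆ kerM A := hM.1.1
  have h0M : (0 : Fin n → ℤ) ∉ M := zero_not_mem_min hM
  have hMne : ∀ z ∈ M, z ≠ 0 := fun z hz h => h0M (h ▸ hz)
  have core' : ∀ z ∈ M, ∀ u v : Fin n → ℤ, u ∈ kerM A → v ∈ kerM A → u ≠ 0 → v ≠ 0 →
      z = u + v → vle (posP u) (posP z) → False :=
    fun z hz u v hu hv hu0 hv0 heq h1 => core hker hM huniq hz hu hv hu0 hv0 heq h1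
  have hMD1 : M ⊆ Dboth (kerM A) := by
    intro z hz
    refine ⟨⟨hMK hz, hMne z hz, ?_⟩, ⟨hMK hz, hMne z hz, ?_⟩⟩
    · rintro ⟨u, v, hu, hv, hu0, hv0, heq, hle, -⟩
      exact core' z hz u v hu hv hu0 hv0 heq hle
    · rintro ⟨u, v, hu, hv, hu0, hv0, heq, hle, -⟩
      exact core' z hz v u hv hu hv0 hu0 (heq.trans (add_comm u v)) (vle_posP_of heq hle)
  have hMD : M ∪ -M ⊆ Dboth (kerM A) := by
    rintro z (hz | hz)
    · exact hMD1 hz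
    · rw [Set.mem_neg] at hz
      have := dboth_neg (hMD1 hz)
      rwa [neg_neg] at this
  have hDM : Dboth (kerM A) ⊆ M ∪ -M := dboth_subset_of_dr hMK hdr
  have hD_eq : Dboth (kerM A) = M ∪ -M := Set.Subset.antisymm hDM hMD
  have hMS : M ⊆ indisp (kerM A) := by
    intro z hz
    refine ⟨hMK hz, hMne z hz, ?_⟩
    rintro ⟨u, v, hu, hv, hu0, hv0, heq, hsc⟩
    exact core' z hz u v hu hv hu0 hv0 heq (semiconf_posP heq hsc)
  have hSD : indisp (kerM A) ⊆ Dboth (kerM A) := by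
    rintro z ⟨hzK, hz0, hns⟩
    refine ⟨⟨hzK, hz0, ?_⟩, ⟨hzK, hz0, ?_⟩⟩
    · rintro ⟨u, v, hu, hv, hu0, hv0, heq, hle, -⟩
      exact hns ⟨u, v, hu, hv, hu0, hv0, heq, semiconf_of_posP heq hle⟩
    · rintro ⟨u, v, hu, hv, hu0, hv0, heq, hle, -⟩
      exact hns ⟨v, u, hv, hu, hv0, hu0, heq.trans (add_comm u v), semiconf_of_negP heq hle⟩
  have hE1 : indisp (kerM A) ∪ -(indisp (kerM A)) = Dboth (kerM A) := by
    apply Set.Subset.antisymm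
    · rintro z (hz | hz)
      · exact hSD hz
      · rw [Set.mem_neg] at hz
        have := dboth_neg (hSD hz)
        rwa [neg_neg] at this
    · intro z hz
      rcases hDM hz with h | h
      · exact Or.inl (hMS h)
      · rw [Set.mem_neg] at h
        exact Or.inr (Set.mem_neg.mpr (hMS h))
  refine ⟨hE1, hD_eq, ?_⟩
  obtain ⟨B₀, hB₀M, hB₀⟩ := exists_min_dr hMK hdr
  apply Set.Subset.antisymm
  · intro z hz
    have hzD : z ∈ Dboth (kerM A) := hMD hz
    rcases dboth_subset_of_dr hB₀.1 hB₀.2.1 hzD with h | h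
    · exact Or.inl ⟨B₀, hB₀, h⟩
    · exact Or.inr (Set.mem_neg.mpr ⟨B₀, hB₀, Set.mem_neg.mp h⟩)
  · have key : ∀ B : Set (Fin n → ℤ), minDistRed (kerM A) B → B ⊆ M ∪ -M := by
      intro B hB
      by_contra hns
      set C := B ∩ (M ∪ -M) with hC
      have hCd : distanceReducing (kerM A) C := by
        intro w hwK hw0
        obtain ⟨msup, hmM, hmred⟩ := hdr w hwK hw0
        have hmB : msup ∈ B ∪ -B := dboth_subset_of_dr hB.1 hB.2.1 (hMD (Or.inl hmM))
        rcases hmB with h | h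
        · exact ⟨msup, ⟨h, Or.inl hmM⟩, hmred⟩
        · rw [Set.mem_neg] at h
          refine ⟨-msup, ⟨h, Or.inr (Set.mem_neg.mpr ?_)⟩, reducesOne_neg hmred⟩
          rwa [neg_neg]
      have hCB : C ⊆ B := Set.inter_subset_left
      have hCne : C ≠ B := by
        intro h
        apply hns
        rw [← h]
        exact Set.inter_subset_right
      exact hB.2.2 C (lt_of_le_of_ne hCB hCne) hCd
    rintro z (hz | hz)
    · obtain ⟨B, hB, hzB⟩ := hz
      exact key B hB hzB
    · rw [Set.mem_neg] at hz
      obtain ⟨B, hB, hzB⟩ := hz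
      rcases key B hB hzB with h | h
      · exact Or.inr (Set.mem_neg.mpr h)
      · rw [Set.mem_neg, neg_neg] at h
        exact Or.inl h

end DistRed
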